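/- Let (x_{ij})_{1≤i,j≤n} be i.i.d. random variables with the exponential distribution of rate 1, set p_{ij} = x_{ij}/∑_{k=1}^{n} x_{ik}, so 𝔓 = (p_{ij}) is a random row-stochastic matrix. Then rank(𝔓 − I) = n − 1 with high probability; that is, for every D > 0 there exists n₀(D) such that for all n ≥ n₀, ℙ(rank(𝔓 − I) = n − 1) ≥ 1 − n^{-D}. -/

import Mathlib

/-!
Almost surely every `x i j` is positive, since the exponential law puts no mass on `(-∞, 0]`.
Then `𝔓` is a row-stochastic matrix with positive entries, and by the maximum principle its fixed
vectors are constant, so `ker (𝔓 - I)` is the line of constant vectors and `rank (𝔓 - I) = n - 1`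
with probability one.
-/

open MeasureTheory ProbabilityTheory Matrix

/-- The random row-stochastic matrix `𝔓` with entries `p i j = y i j / ∑ₖ y i k`. -/
noncomputable def Pmat {n : ℕ} (y : Fin n → Fin n → ℝ) : Matrix (Fin n) (Fin n) ℝ :=
  Matrix.of fun i j => y i j / ∑ k, y i k

section MaximumPrinciple

variable {ι K : Type*} [Fintype ι] [Field K] [LinearOrder K] [IsStrictOrderedRing K]

/-- At a maximal coordinate `i₀`, `v i₀` is an average with positive weights of coordinates that are
all `≤ v i₀`, so they all equal `v i₀`. -/
lemma Matrix.eq_const_of_mulVec_eq_self {P : Matrix ι ι K} (hpos : ∀ i j, 0 < P i j)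
    (hrow : ∀ i, ∑ j, P i j = 1) {v : ι → K} (hv : P *ᵥ v = v) : ∃ c, v = fun _ => c := by
  cases isEmpty_or_nonempty ι
  · exact ⟨0, Subsingleton.elim _ _⟩
  obtain ⟨i₀, -, hmax⟩ := Finset.univ.exists_max_image v Finset.univ_nonempty
  have hle : ∀ j ∈ Finset.univ, P i₀ j * v j ≤ P i₀ j * v i₀ := fun j hj =>
    mul_le_mul_of_nonneg_left (hmax j hj) (hpos i₀ j).le
  have havg : ∑ j, P i₀ j * v j = ∑ j, P i₀ j * v i₀ := by
    rw [← Finset.sum_mul, hrow, one_mul]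
    exact congrFun hv i₀
  refine ⟨v i₀, funext fun j => mul_left_cancel₀ (hpos i₀ j).ne' ?_⟩
  exact (Finset.sum_eq_sum_iff_of_le hle).mp havg j (Finset.mem_univ j)

variable [DecidableEq ι]

lemma Matrix.ker_mulVecLin_sub_one_of_stochastic {P : Matrix ι ι K} (hpos : ∀ i j, 0 < P i j)
    (hrow : ∀ i, ∑ j, P i j = 1) :
    LinearMap.ker (P - 1).mulVecLin = K ∙ (fun _ => 1) := by
  ext v
  simp only [LinearMap.mem_ker, mulVecLin_apply, sub_mulVec, one_mulVec, sub_eq_zero,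
    Submodule.mem_span_singleton]
  constructor
  · intro hv
    obtain ⟨c, rfl⟩ := eq_const_of_mulVec_eq_self hpos hrow hv
    exact ⟨c, funext fun _ => mul_one c⟩
  · rintro ⟨c, rfl⟩
    funext i
    simp only [mulVec, dotProduct, Pi.smul_apply, smul_eq_mul, mul_one]
    rw [← Finset.sum_mul, hrow, one_mul]

lemma Matrix.rank_sub_one_of_stochastic {P : Matrix ι ι K} (hpos : ∀ i j, 0 < P i j)
    (hrow : ∀ i, ∑ j, P i j = 1) : (P - 1).rank = Fintype.card ι - 1 := by
  cases isEmpty_or_nonempty ι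
  · simpa using (P - 1).rank_le_card_width
  have hker : Module.finrank K (LinearMap.ker (P - 1).mulVecLin) = 1 := by
    rw [ker_mulVecLin_sub_one_of_stochastic hpos hrow, finrank_span_singleton]
    exact Function.ne_iff.mpr ⟨Classical.arbitrary ι, one_ne_zero⟩
  have := LinearMap.finrank_range_add_finrank_ker (P - 1).mulVecLin
  rw [hker, Module.finrank_fintype_fun_eq_card] at this
  rw [Matrix.rank]
  omega

end MaximumPrinciple

lemma Pmat_pos {n : ℕ} {y : Fin n → Fin n → ℝ} (hy : ∀ i j, 0 < y i j) (i j : Fin n) :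
    0 < Pmat y i j :=
  div_pos (hy i j) (Finset.sum_pos (fun k _ => hy i k) ⟨j, Finset.mem_univ j⟩)

lemma Pmat_row_sum {n : ℕ} {y : Fin n → Fin n → ℝ} (hy : ∀ i j, 0 < y i j) (i : Fin n) :
    ∑ j, Pmat y i j = 1 := by
  simp only [Pmat, Matrix.of_apply, ← Finset.sum_div]
  exact div_self (Finset.sum_pos (fun k _ => hy i k) ⟨i, Finset.mem_univ i⟩).ne'

lemma rank_Pmat_sub_one {n : ℕ} {y : Fin n → Fin n → ℝ} (hy : ∀ i j, 0 < y i j) :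
    (Pmat y - 1).rank = n - 1 := by
  simpa using Matrix.rank_sub_one_of_stochastic (Pmat_pos hy) (Pmat_row_sum hy)

lemma ProbabilityTheory.expMeasure_Iic_zero {r : ℝ} (hr : 0 < r) :
    expMeasure r (Set.Iic 0) = 0 := by
  rw [expMeasure, gammaMeasure, withDensity_apply _ measurableSet_Iic]
  exact (lintegral_exponentialPDF_eq_antiDeriv hr 0).trans (by simp)

lemma ProbabilityTheory.ae_pos_expMeasure {r : ℝ} (hr : 0 < r) : ∀ᵐ y ∂expMeasure r, 0 < y := by
  simp only [ae_iff, not_lt]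
  exact expMeasure_Iic_zero hr

theorem stmt14_general
    (Ω : ℕ → Type) [∀ n, MeasurableSpace (Ω n)]
    (μ : ∀ n, Measure (Ω n)) [∀ n, IsProbabilityMeasure (μ n)]
    (x : ∀ n, Fin n → Fin n → Ω n → ℝ)
    (hmeas : ∀ n i j, Measurable (x n i j))
    (hdist : ∀ n i j, (μ n).map (x n i j) = ProbabilityTheory.expMeasure 1) :
    ∀ D > (0 : ℝ), ∃ n₀ : ℕ, ∀ n ≥ n₀,
      1 - ENNReal.ofReal ((n : ℝ) ^ (-D)) ≤
        μ n {ω | (Pmat (fun i j => x n i j ω) - 1).rank = n - 1} := by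
  intro D _
  refine ⟨0, fun n _ => ?_⟩
  have hpos : ∀ᵐ ω ∂μ n, ∀ i j, 0 < x n i j ω :=
    ae_all_iff.2 fun i => ae_all_iff.2 fun j =>
      ae_of_ae_map (hmeas n i j).aemeasurable (hdist n i j ▸ ae_pos_expMeasure one_pos)
  have hrank : μ n {ω | (Pmat (fun i j => x n i j ω) - 1).rank = n - 1} = 1 := by
    rw [← measure_univ (μ := μ n)]
    exact measure_congr (ae_eq_univ.2 (hpos.mono fun ω hω => rank_Pmat_sub_one hω))
  rw [hrank]
  exact tsub_le_self

/-- For the random row-stochastic matrix `𝔓` built from i.i.d. rate-1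
exponential variables, `rank (𝔓 - I) = n - 1` with high probability: for every `D > 0`
there is `n₀` such that for all `n ≥ n₀`, `ℙ(rank (𝔓 - I) = n - 1) ≥ 1 - n^(-D)`. -/
theorem stmt14
    (Ω : ℕ → Type) [∀ n, MeasurableSpace (Ω n)]
    (μ : ∀ n, Measure (Ω n)) [∀ n, IsProbabilityMeasure (μ n)]
    (x : ∀ n, Fin n → Fin n → Ω n → ℝ)
    (hmeas : ∀ n i j, Measurable (x n i j))
    (hdist : ∀ n i j, (μ n).map (x n i j) = ProbabilityTheory.expMeasure 1)
    (hindep : ∀ n, iIndepFun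
      (fun p : Fin n × Fin n => x n p.1 p.2) (μ n)) :
    ∀ D > (0 : ℝ), ∃ n₀ : ℕ, ∀ n ≥ n₀,
      1 - ENNReal.ofReal ((n : ℝ) ^ (-D)) ≤
        μ n {ω | (Pmat (fun i j => x n i j ω) - 1).rank = n - 1} :=
  stmt14_general Ω μ x hmeas hdist
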